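/- Let K be a convex body in ℝⁿ, x ∈ int K, and y ∈ ℝⁿ \ {0}. Then the supremum defining b*_K(x,y) is attained: there exists a ∈ ℝⁿ such that the ellipse with parameters (a, b*_K(x,y)) through x in direction y is inscribed in K. -/

import Mathlib

/-- A convex body in ℝⁿ: a compact convex set with nonempty interior. -/
def IsConvexBody {n : ℕ} (K : Set (EuclideanSpace ℝ (Fin n))) : Prop :=
  IsCompact K ∧ Convex ℝ K ∧ (interior K).Nonempty

/-- The ellipse with parameters `(a, b)` through `x` in direction `y`,
`θ ↦ (cos θ)•a + b(sin θ)•y + (x - a)`, is inscribed in `K`. -/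
def InscribedEllipse {n : ℕ} (K : Set (EuclideanSpace ℝ (Fin n)))
    (x y a : EuclideanSpace ℝ (Fin n)) (b : ℝ) : Prop :=
  ∀ θ : ℝ, (Real.cos θ) • a + (b * Real.sin θ) • y + (x - a) ∈ K

/-- `b*_K(x,y)`: the supremum of `b > 0` such that some ellipse with parameters
`(a,b)` through `x` in direction `y` is inscribed in `K`. -/
noncomputable def bStar {n : ℕ} (K : Set (EuclideanSpace ℝ (Fin n)))
    (x y : EuclideanSpace ℝ (Fin n)) : ℝ :=
  sSup { b : ℝ | 0 < b ∧ ∃ a, InscribedEllipse K x y a b }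

/-!
The pairs `(a, b)` whose ellipse is inscribed in `K` form a closed set,
and a bounded one: the point at `θ = π` is `x - 2a ∈ K`, and the points at `θ = ±π/2` are
`2|b|‖y‖` apart. So `b*_K(x,y)`, the supremum of a nonempty bounded set of such `b`, is a limit
of such `b` and hence is itself attained.
-/

open Real

variable {n : ℕ} {K : Set (EuclideanSpace ℝ (Fin n))} {x y a : EuclideanSpace ℝ (Fin n)}
  {b : ℝ}

namespace InscribedEllipse

theorem sub_two_smul_mem (h : InscribedEllipse K x y a b) : x - (2 : ℝ) • a ∈ K := by
  convert h π using 1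
  simp only [cos_pi, sin_pi, mul_zero, zero_smul, add_zero]
  module

theorem two_mul_abs_mul_norm_le_diam (hK : Bornology.IsBounded K)
    (h : InscribedEllipse K x y a b) : 2 * (|b| * ‖y‖) ≤ Metric.diam K := by
  have hdist := Metric.dist_le_diam_of_mem hK (h (π / 2)) (h (-(π / 2)))
  simp only [cos_pi_div_two, sin_pi_div_two, cos_neg, sin_neg, zero_smul, zero_add, mul_one,
    mul_neg, neg_smul, dist_eq_norm] at hdist
  convert hdist using 1
  rw [show b • y + (x - a) - (-(b • y) + (x - a)) = (2 * b) • y by module, norm_smul,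
    Real.norm_eq_abs, abs_mul, abs_two, mul_assoc]

end InscribedEllipse

theorem exists_pos_inscribedEllipse_zero_of_mem_interior (hx : x ∈ interior K)
    (y : EuclideanSpace ℝ (Fin n)) : ∃ b > 0, InscribedEllipse K x y 0 b := by
  obtain ⟨ε, hε, hball⟩ := Metric.mem_nhds_iff.mp (mem_interior_iff_mem_nhds.mp hx)
  refine ⟨ε / (‖y‖ + 1), by positivity, fun θ => hball ?_⟩
  rw [smul_zero, sub_zero, zero_add, Metric.mem_ball, dist_eq_norm, add_sub_cancel_right,
    norm_smul, Real.norm_eq_abs, abs_mul, abs_of_pos (by positivity)]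
  calc ε / (‖y‖ + 1) * |sin θ| * ‖y‖ ≤ ε / (‖y‖ + 1) * 1 * ‖y‖ := by
        gcongr; exact abs_sin_le_one θ
    _ < ε / (‖y‖ + 1) * (‖y‖ + 1) := by rw [mul_one]; gcongr; linarith
    _ = ε := div_mul_cancel₀ ε (by positivity)

theorem isCompact_setOf_inscribedEllipse (hK : IsCompact K) (x : EuclideanSpace ℝ (Fin n))
    (hy : y ≠ 0) :
    IsCompact {p : EuclideanSpace ℝ (Fin n) × ℝ | InscribedEllipse K x y p.1 p.2} := by
  have hclosed :
      IsClosed {p : EuclideanSpace ℝ (Fin n) × ℝ | InscribedEllipse K x y p.1 p.2} := by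
    simp only [InscribedEllipse, Set.ofPred_forall]
    exact isClosed_iInter fun θ => hK.isClosed.preimage (by fun_prop)
  have hcenters : IsCompact ((fun p => (2⁻¹ : ℝ) • (x - p)) '' K) := hK.image (by fun_prop)
  refine (hcenters.prod (isCompact_closedBall 0 (Metric.diam K / (2 * ‖y‖)))).of_isClosed_subset
    hclosed ?_
  rintro ⟨a, b⟩ h
  refine ⟨⟨x - (2 : ℝ) • a, h.sub_two_smul_mem, by module⟩, ?_⟩
  rw [mem_closedBall_zero_iff, Real.norm_eq_abs, le_div_iff₀ (by positivity)]
  linarith [h.two_mul_abs_mul_norm_le_diam hK.isBounded]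

theorem stmt_9 {n : ℕ} (K : Set (EuclideanSpace ℝ (Fin n)))
    (hK : IsConvexBody K) (x y : EuclideanSpace ℝ (Fin n))
    (hx : x ∈ interior K) (hy : y ≠ 0) :
    ∃ a : EuclideanSpace ℝ (Fin n), InscribedEllipse K x y a (bStar K x y) := by
  set T := {p : EuclideanSpace ℝ (Fin n) × ℝ | InscribedEllipse K x y p.1 p.2}
  have hwidths : IsCompact (Prod.snd '' T) :=
    (isCompact_setOf_inscribedEllipse hK.1 x hy).image continuous_snd
  have hsub : {b : ℝ | 0 < b ∧ ∃ a, InscribedEllipse K x y a b} ⊆ Prod.snd '' T :=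
    fun b ⟨_, a, ha⟩ => ⟨(a, b), ha, rfl⟩
  obtain ⟨b, hb, hb_ins⟩ := exists_pos_inscribedEllipse_zero_of_mem_interior hx y
  obtain ⟨⟨a, _⟩, ha, rfl⟩ := hwidths.isClosed.closure_subset_iff.mpr hsub
    (csSup_mem_closure ⟨b, hb, 0, hb_ins⟩ (hwidths.bddAbove.mono hsub))
  exact ⟨a, ha⟩
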